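/- arXiv:2402.14775 — 4 statements merged into one kernel-verified Lean document; each statement's English description precedes it below -/
import Mathlib

section
/- Two DAGs G_1 and G_2 on the same vertex set V are Markov equivalent (they have exactly the same d-separations) if and only if sk(G_1) = sk(G_2) and G_1 and G_2 have exactly the same collider v-configurations. -/
open MeasureTheory ProbabilityTheory

/-- A directed acyclic graph on vertex set `V`: a directed edge relation with no
directed cycles (a directed path from a node to itself). -/
structure DAG (V : Type*) where
  Edge : V → V → Prop
  acyclic : ∀ i, ¬ Relation.TransGen Edge i i

namespace DAG

variable {V : Type*}

/-- `i` and `j` are adjacent if there is a directed edge between them in either direction. -/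
def Adj (G : DAG V) (i j : V) : Prop := G.Edge i j ∨ G.Edge j i

/-- `an_G(C)`: the set of nodes not in `C` with a directed path to some node of `C`. -/
def ancestors (G : DAG V) (C : Set V) : Set V :=
  {i | i ∉ C ∧ ∃ j ∈ C, Relation.TransGen G.Edge i j}

/-- A path between `a` and `b` in (the skeleton of) a DAG `G`: a sequence of at least two
distinct vertices starting at `a`, ending at `b`, with consecutive vertices adjacent. -/
structure Path (G : DAG V) (a b : V) where
  n : ℕ
  npos : 0 < n
  f : Fin (n + 1) → V
  first : f 0 = a
  last : f (Fin.last n) = b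
  adj : ∀ i : Fin n, G.Adj (f i.castSucc) (f i.succ)
  inj : Function.Injective f

/-- The intermediate node at position `t` of the path is a collider on the path:
both incident edges of the path point into it. -/
def Path.ColliderAt {G : DAG V} {a b : V} (π : Path G a b) (t : ℕ)
    (h1 : 0 < t) (h2 : t < π.n) : Prop :=
  G.Edge (π.f ⟨t - 1, by omega⟩) (π.f ⟨t, by omega⟩) ∧
  G.Edge (π.f ⟨t + 1, by omega⟩) (π.f ⟨t, by omega⟩)

/-- A path is blocked by `C` if some intermediate non-collider on the path lies in `C`,
or some collider `m` on the path satisfies `m ∉ C ∪ an_G(C)`. -/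
def Path.Blocked {G : DAG V} {a b : V} (π : Path G a b) (C : Set V) : Prop :=
  ∃ (t : ℕ) (h1 : 0 < t) (h2 : t < π.n),
    (¬ π.ColliderAt t h1 h2 ∧ π.f ⟨t, by omega⟩ ∈ C) ∨
    (π.ColliderAt t h1 h2 ∧ π.f ⟨t, by omega⟩ ∉ C ∪ G.ancestors C)

/-- d-separation: every path between a node of `A` and a node of `B` is blocked by `C`. -/
def dSep (G : DAG V) (A B C : Set V) : Prop :=
  ∀ a ∈ A, ∀ b ∈ B, ∀ π : Path G a b, π.Blocked C

/-- Two DAGs are Markov equivalent if they have exactly the same d-separations. -/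
def MarkovEquiv (G₁ G₂ : DAG V) : Prop :=
  ∀ A B C : Set V, Disjoint A B → Disjoint A C → Disjoint B C →
    (G₁.dSep A B C ↔ G₂.dSep A B C)

/-- A v-configuration `i ∼ k ∼ j` in the DAG: `i, k, j` distinct, `i` and `j` each
adjacent to `k`, but `i` and `j` not adjacent. -/
def VConfig (G : DAG V) (i k j : V) : Prop :=
  i ≠ j ∧ i ≠ k ∧ j ≠ k ∧ G.Adj i k ∧ G.Adj j k ∧ ¬ G.Adj i j

/-- A collider v-configuration `i → k ← j`. -/
def IsCollider (G : DAG V) (i k j : V) : Prop :=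
  G.VConfig i k j ∧ G.Edge i k ∧ G.Edge j k

/-- A non-collider v-configuration. -/
def IsNonCollider (G : DAG V) (i k j : V) : Prop :=
  G.VConfig i k j ∧ ¬ (G.Edge i k ∧ G.Edge j k)

end DAG

/-- A v-configuration `i ∼ k ∼ j` in an undirected graph given by an adjacency relation. -/
def VConfigRel {V : Type*} (A : V → V → Prop) (i k j : V) : Prop :=
  i ≠ j ∧ i ≠ k ∧ j ≠ k ∧ A i k ∧ A j k ∧ ¬ A i j

section Prob

variable {V : Type*} {Ω : Type*} [MeasurableSpace Ω] [StandardBorelSpace Ω] [Nonempty Ω]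
  {E : V → Type*} [∀ i, MeasurableSpace (E i)]

/-- `A ⫫ B | C`: the families `(X i)_{i ∈ A}` and `(X j)_{j ∈ B}` are conditionally
independent given the σ-algebra generated by `(X k)_{k ∈ C}`, under `μ`. -/
def CI (μ : Measure Ω) [IsFiniteMeasure μ] (X : ∀ i, Ω → E i)
    (hX : ∀ i, Measurable (X i)) (A B C : Set V) : Prop :=
  CondIndepFun (MeasurableSpace.comap (fun ω => fun k : C => X k.1 ω) inferInstance)
    ((measurable_pi_iff.mpr fun k : C => hX k.1).comap_le)
    (fun ω => fun i : A => X i.1 ω) (fun ω => fun j : B => X j.1 ω) μ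

variable (μ : Measure Ω) [IsFiniteMeasure μ] (X : ∀ i, Ω → E i) (hX : ∀ i, Measurable (X i))

/-- The skeleton of `P`: distinct `i, j` are adjacent iff no `C ⊆ V \ {i,j}` renders
`{i} ⫫ {j} | C`. -/
def SkP (i j : V) : Prop :=
  i ≠ j ∧ ¬ ∃ C : Set V, C ⊆ ({i, j} : Set V)ᶜ ∧ CI μ X hX {i} {j} C

/-- `P` is Markovian to `G`: every d-separation implies the corresponding
conditional independence. -/
def MarkovTo (G : DAG V) : Prop :=
  ∀ A B C : Set V, Disjoint A B → Disjoint A C → Disjoint B C →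
    G.dSep A B C → CI μ X hX A B C

/-- Adjacency faithfulness: adjacent nodes of `G` are separated by no conditioning set. -/
def AdjFaithful (G : DAG V) : Prop :=
  ∀ i j : V, G.Adj i j → ¬ ∃ C : Set V, C ⊆ ({i, j} : Set V)ᶜ ∧ CI μ X hX {i} {j} C

/-- `sk(P) = sk(G)`. -/
def SkelEq (G : DAG V) : Prop :=
  ∀ i j : V, G.Adj i j ↔ SkP μ X hX i j

/-- V-ordered upward stability wrt `G`. -/
def VOUS (G : DAG V) : Prop :=
  ∀ i k j : V, G.IsNonCollider i k j → ∀ C : Set V, C ⊆ ({i, j, k} : Set V)ᶜ →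
    CI μ X hX {i} {j} C → CI μ X hX {i} {j} (C ∪ {k})

/-- Collider-stability wrt `G`. -/
def ColliderStable (G : DAG V) : Prop :=
  ∀ i k j : V, G.IsCollider i k j →
    ∃ C : Set V, C ⊆ ({i, j, k} : Set V)ᶜ ∧ CI μ X hX {i} {j} C

/-- V-stability of `P`. -/
def VStable : Prop :=
  ∀ i k j : V, VConfigRel (SkP μ X hX) i k j → ∀ C : Set V, C ⊆ ({i, j, k} : Set V)ᶜ →
    ¬ (CI μ X hX {i} {j} C ∧ CI μ X hX {i} {j} (C ∪ {k}))

/-- The orientation rule assigns the v-configuration `i ∼ k ∼ j` of `sk(P)` to be a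
collider. -/
def AssignedCollider (i k j : V) : Prop :=
  VConfigRel (SkP μ X hX) i k j ∧
  ∃ C : Set V, C ⊆ ({i, j, k} : Set V)ᶜ ∧
    CI μ X hX {i} {j} C ∧ ¬ CI μ X hX {i} {j} (C ∪ {k})

/-- The orientation rule assigns the v-configuration `i ∼ k ∼ j` of `sk(P)` to be a
non-collider. -/
def AssignedNonCollider (i k j : V) : Prop :=
  VConfigRel (SkP μ X hX) i k j ∧
  ∀ C : Set V, C ⊆ ({i, j} : Set V)ᶜ → CI μ X hX {i} {j} C → k ∈ C

/-- A DAG `G` satisfies the V-OUS and collider-stable orientation rule wrt `P`. -/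
def SatisfiesRule (G : DAG V) : Prop :=
  SkelEq μ X hX G ∧
  (∀ i k j : V, AssignedCollider μ X hX i k j → G.IsCollider i k j) ∧
  (∀ i k j : V, AssignedNonCollider μ X hX i k j → G.IsNonCollider i k j)

/-- Modified V-stability: any two DAGs `G` with `sk(G) = sk(P)` to which `P` is V-OUS and
collider-stable are Markov equivalent. -/
def ModifiedVStable : Prop :=
  ∀ G₁ G₂ : DAG V,
    SkelEq μ X hX G₁ → VOUS μ X hX G₁ → ColliderStable μ X hX G₁ →
    SkelEq μ X hX G₂ → VOUS μ X hX G₂ → ColliderStable μ X hX G₂ →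
    DAG.MarkovEquiv G₁ G₂

/-- Ordered upward stability wrt `G`. -/
def OUS (G : DAG V) : Prop :=
  ∀ i j k : V, i ≠ j → i ≠ k → j ≠ k → k ∈ G.ancestors {i, j} →
    ∀ C : Set V, C ⊆ ({i, j, k} : Set V)ᶜ →
      CI μ X hX {i} {j} C → CI μ X hX {i} {j} (C ∪ {k})

/-- Ordered downward stability wrt `G`. -/
def ODS (G : DAG V) : Prop :=
  ∀ i j k : V, i ≠ j → i ≠ k → j ≠ k →
    ∀ C : Set V, C ⊆ ({i, j, k} : Set V)ᶜ → k ∉ G.ancestors ({i, j} ∪ C) →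
      CI μ X hX {i} {j} (C ∪ {k}) → CI μ X hX {i} {j} C

end Prob

/-! Markov equivalent DAGs have the same skeleton, since adjacent vertices are never d-separated
while non-adjacent ones are separated by the parents of the one that is not an ancestor of the
other; and they have the same colliders, since a set separating the ends of a v-configuration
contains its middle vertex exactly when that vertex is a non-collider.

Conversely (Chickering), if the skeletons and colliders agree but `G₁ ≠ G₂`, some edge `x → y` of
`G₁` reversed in `G₂` is covered, i.e. `pa(y) = pa(x) ∪ {x}`. Reversing it keeps the skeleton and
the colliders and brings `G₁` closer to `G₂`, and it preserves d-separation: d-connection is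
witnessed by walks whose colliders lie in `C` itself, and such walks can be rerouted around the
reversed edge because `x` and `y` have the same other parents. -/

open Relation

lemma Relation.transGen_of_chain {α : Type*} {r : α → α → Prop} (f : ℕ → α) {s t : ℕ}
    (hst : s < t) (h : ∀ i, s ≤ i → i < t → r (f i) (f (i + 1))) : TransGen r (f s) (f t) :=
  (transGen_of_succ_of_lt (fun i j => r (f i) (f j))
    (fun i hi => by simpa using h i hi.1 hi.2) hst).lift f fun _ _ h => h

namespace DAG

variable {V : Type*} {G G₁ G₂ H : DAG V} {C : Set V} {a b x y : V}

lemma edge_irrefl (G : DAG V) (v : V) : ¬ G.Edge v v :=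
  fun h => G.acyclic v (.single h)

lemma edge_asymm {u v : V} (h : G.Edge u v) : ¬ G.Edge v u :=
  fun h' => G.acyclic u ((TransGen.single h).tail h')

lemma ne_of_edge {u v : V} (h : G.Edge u v) : u ≠ v := by
  rintro rfl
  exact G.edge_irrefl u h

lemma ne_of_adj {u v : V} (h : G.Adj u v) : u ≠ v :=
  h.elim ne_of_edge fun h => (ne_of_edge h).symm

lemma Edge.adj {u v : V} (h : G.Edge u v) : G.Adj u v := Or.inl h

lemma Adj.symm {u v : V} (h : G.Adj u v) : G.Adj v u := Or.symm h

lemma mem_union_ancestors_iff {v : V} :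
    v ∈ C ∪ G.ancestors C ↔ ∃ c ∈ C, ReflTransGen G.Edge v c := by
  constructor
  · rintro (hv | ⟨-, c, hc, hvc⟩)
    · exact ⟨v, hv, .refl⟩
    · exact ⟨c, hc, hvc.to_reflTransGen⟩
  · rintro ⟨c, hc, hvc⟩
    rcases reflTransGen_iff_eq_or_transGen.mp hvc with rfl | hvc
    · exact Or.inl hc
    · by_cases hv : v ∈ C
      · exact Or.inl hv
      · exact Or.inr ⟨hv, c, hc, hvc⟩

lemma mem_union_ancestors_of_transGen {v w : V} (hvw : TransGen G.Edge v w)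
    (hw : w ∈ C ∪ G.ancestors C) : v ∈ C ∪ G.ancestors C := by
  obtain ⟨c, hc, hwc⟩ := mem_union_ancestors_iff.mp hw
  exact mem_union_ancestors_iff.mpr ⟨c, hc, hvw.to_reflTransGen.trans hwc⟩

/-! ### Active walks -/

def ActiveTriple (G : DAG V) (C : Set V) (u v w : V) : Prop :=
  (G.Edge u v ∧ G.Edge w v → v ∈ C ∪ G.ancestors C) ∧ (¬ (G.Edge u v ∧ G.Edge w v) → v ∉ C)

lemma ActiveTriple.symm {u v w : V} (h : G.ActiveTriple C u v w) : G.ActiveTriple C w v u :=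
  ⟨fun hc => h.1 hc.symm, fun hc => h.2 fun hc' => hc hc'.symm⟩

lemma activeTriple_of_edge_out {u v w : V} (hvw : G.Edge v w) (hv : v ∉ C) :
    G.ActiveTriple C u v w :=
  ⟨fun hc => absurd hc.2 (edge_asymm hvw), fun _ => hv⟩

lemma Path.ne (π : Path G a b) : a ≠ b := by
  rintro rfl
  have h := congrArg Fin.val (π.inj (π.first.trans π.last.symm))
  simp only [Fin.val_zero, Fin.val_last] at h
  exact π.npos.ne h

lemma Path.not_blocked_iff (π : Path G a b) (C : Set V) :
    ¬ π.Blocked C ↔ ∀ t (h₁ : 0 < t) (h₂ : t < π.n),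
      G.ActiveTriple C (π.f ⟨t - 1, by omega⟩) (π.f ⟨t, by omega⟩) (π.f ⟨t + 1, by omega⟩) := by
  simp only [Path.Blocked, Path.ColliderAt, ActiveTriple, not_exists, not_or, not_and, not_not]
  exact forall₃_congr fun _ _ _ => and_comm

/-- Like an unblocked `Path`, but vertices may repeat; `f` is indexed by `ℕ` and its values beyond
`n` are irrelevant. -/
structure ActiveWalk (G : DAG V) (C : Set V) (a b : V) where
  n : ℕ
  f : ℕ → V
  first : f 0 = a
  last : f n = b
  adj : ∀ t < n, G.Adj (f t) (f (t + 1))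
  active : ∀ t, 0 < t → t < n → G.ActiveTriple C (f (t - 1)) (f t) (f (t + 1))

def ActiveWalk.nil (G : DAG V) (C : Set V) (a : V) : ActiveWalk G C a a where
  n := 0
  f _ := a
  first := rfl
  last := rfl
  adj _ h := absurd h (Nat.not_lt_zero _)
  active _ h₁ h₂ := by omega

def ActiveWalk.snoc {w : V} (W : ActiveWalk G C a b) (hbw : G.Adj b w)
    (hact : 0 < W.n → G.ActiveTriple C (W.f (W.n - 1)) b w) : ActiveWalk G C a w where
  n := W.n + 1
  f t := if t ≤ W.n then W.f t else w
  first := by simp [W.first]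
  last := by simp
  adj t ht := by
    rcases Nat.lt_or_eq_of_le (Nat.lt_succ_iff.mp ht) with ht | rfl
    · simpa [ht.le, Nat.succ_le_of_lt ht] using W.adj t ht
    · simpa [W.last] using hbw
  active t h₁ h₂ := by
    rcases Nat.lt_or_eq_of_le (Nat.lt_succ_iff.mp h₂) with ht | rfl
    · simpa [ht.le, Nat.succ_le_of_lt ht, (Nat.sub_le t 1).trans ht.le] using W.active t h₁ ht
    · simpa [W.last] using hact h₁

@[simp] lemma ActiveWalk.snoc_n {w : V} (W : ActiveWalk G C a b) (hbw : G.Adj b w)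
    (hact : 0 < W.n → G.ActiveTriple C (W.f (W.n - 1)) b w) : (W.snoc hbw hact).n = W.n + 1 :=
  rfl

@[simp] lemma ActiveWalk.snoc_f_n {w : V} (W : ActiveWalk G C a b) (hbw : G.Adj b w)
    (hact : 0 < W.n → G.ActiveTriple C (W.f (W.n - 1)) b w) :
    (W.snoc hbw hact).f W.n = b := by
  simp [ActiveWalk.snoc, W.last]

def ActiveWalk.reverse (W : ActiveWalk G C a b) : ActiveWalk G C b a where
  n := W.n
  f t := W.f (W.n - t)
  first := by simpa using W.last
  last := by simpa using W.first
  adj t ht := by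
    have h := (W.adj (W.n - t - 1) (by omega)).symm
    rwa [show W.n - t - 1 + 1 = W.n - t by omega, ← show W.n - (t + 1) = W.n - t - 1 by omega]
      at h
  active t h₁ h₂ := by
    have h := (W.active (W.n - t) (by omega) (by omega)).symm
    rwa [show W.n - t + 1 = W.n - (t - 1) by omega, show W.n - t - 1 = W.n - (t + 1) by omega]
      at h

def Path.toActiveWalk (π : Path G a b) (hπ : ¬ π.Blocked C) : ActiveWalk G C a b where
  n := π.n
  f t := if h : t ≤ π.n then π.f ⟨t, by omega⟩ else b
  first := by simpa using π.first
  last := by simp only [le_refl, dite_true]; exact π.last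
  adj t ht := by
    simpa [ht.le, Nat.succ_le_of_lt ht, Fin.castSucc_mk, Fin.succ_mk] using π.adj ⟨t, ht⟩
  active t h₁ h₂ := by
    simpa [h₂.le, Nat.succ_le_of_lt h₂, (Nat.sub_le t 1).trans h₂.le] using
      (π.not_blocked_iff C).mp hπ t h₁ h₂

namespace ActiveWalk

variable (W : ActiveWalk G C a b)

/-- Acyclicity forces a walk that leaves `f s` forwards and comes back to it to turn around at a
collider below `f s`. -/
lemma mem_union_ancestors_of_return {s t : ℕ} (hst : s < t) (ht : t ≤ W.n)
    (heq : W.f s = W.f t) (hfwd : G.Edge (W.f s) (W.f (s + 1))) :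
    W.f s ∈ C ∪ G.ancestors C := by
  classical
  have hturn : ∃ q, s ≤ q ∧ q < t ∧ ¬ G.Edge (W.f q) (W.f (q + 1)) := by
    by_contra! hall
    exact G.acyclic _ (heq ▸ transGen_of_chain W.f hst hall)
  obtain ⟨hsq, hqt, hq⟩ := Nat.find_spec hturn
  set q := Nat.find hturn
  have hchain : ∀ i, s ≤ i → i < q → G.Edge (W.f i) (W.f (i + 1)) := fun i h₁ h₂ => by
    by_contra h
    exact Nat.find_min hturn h₂ ⟨h₁, by omega, h⟩
  have hsq' : s < q := lt_of_le_of_ne hsq fun h => hq (h ▸ hfwd)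
  have hin : G.Edge (W.f (q - 1)) (W.f q) := by
    simpa [Nat.sub_add_cancel (by omega : 1 ≤ q)] using hchain (q - 1) (by omega) (by omega)
  have hcol := (W.active q (by omega) (by omega)).1 ⟨hin, (W.adj q (by omega)).resolve_left hq⟩
  exact mem_union_ancestors_of_transGen (transGen_of_chain W.f hsq' hchain) hcol

lemma activeTriple_splice {s t : ℕ} (hs : 0 < s) (hst : s < t) (ht : t < W.n)
    (heq : W.f s = W.f t) : G.ActiveTriple C (W.f (s - 1)) (W.f s) (W.f (t + 1)) := by
  have hact_s := W.active s hs (by omega)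
  have hact_t := W.active t (by omega) ht
  refine ⟨fun ⟨hin, _⟩ => ?_, fun hnc hC => ?_⟩
  · by_cases hcol : G.Edge (W.f (s + 1)) (W.f s)
    · exact hact_s.1 ⟨hin, hcol⟩
    · exact W.mem_union_ancestors_of_return hst ht.le heq
        ((W.adj s (by omega)).resolve_right hcol)
  · have hin : G.Edge (W.f (s - 1)) (W.f s) := by
      by_contra h
      exact hact_s.2 (fun hc => h hc.1) hC
    have hout : G.Edge (W.f (t + 1)) (W.f t) := by
      by_contra h
      exact hact_t.2 (fun hc => h hc.2) (heq ▸ hC)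
    exact hnc ⟨hin, heq ▸ hout⟩

/-- Cutting out the closed subwalk between two visits of the same vertex. -/
lemma exists_shorter (hab : a ≠ b) {s t : ℕ} (hst : s < t) (ht : t ≤ W.n)
    (heq : W.f s = W.f t) : ∃ W' : ActiveWalk G C a b, W'.n < W.n := by
  set f' : ℕ → V := fun r => if r ≤ s then W.f r else W.f (r + (t - s))
  have hlow : ∀ r ≤ s, f' r = W.f r := fun r hr => if_pos hr
  have hhigh : ∀ r, s ≤ r → f' r = W.f (r + (t - s)) := by
    intro r hr
    rcases hr.lt_or_eq with hr | hr
    · exact if_neg (by omega)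
    · rw [← hr, hlow s le_rfl, heq, Nat.add_sub_cancel' hst.le]
  have hn : 0 < W.n - (t - s) := by
    by_contra h
    have hs0 : s = 0 := by omega
    have htn : t = W.n := by omega
    subst hs0 htn
    exact hab (W.first.symm.trans (heq.trans W.last))
  refine ⟨⟨W.n - (t - s), f', by rw [hlow 0 (Nat.zero_le _), W.first], ?_, ?_, ?_⟩,
    show W.n - (t - s) < W.n by omega⟩
  · rw [hhigh _ (by omega), Nat.sub_add_cancel (by omega), W.last]
  · intro r hr
    rcases Nat.lt_or_ge r s with hrs | hrs
    · rw [hlow r hrs.le, hlow (r + 1) hrs]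
      exact W.adj r (by omega)
    · rw [hhigh r hrs, hhigh (r + 1) (by omega), Nat.add_right_comm]
      exact W.adj _ (by omega)
  · intro r h₁ h₂
    rcases lt_trichotomy r s with hrs | rfl | hrs
    · rw [hlow _ (by omega), hlow r hrs.le, hlow (r + 1) hrs]
      exact W.active r h₁ (by omega)
    · rw [hlow _ (by omega), hlow r le_rfl, hhigh (r + 1) (by omega),
        show r + 1 + (t - r) = t + 1 by omega]
      exact W.activeTriple_splice h₁ hst (by omega) heq
    · rw [hhigh _ (by omega), hhigh r hrs.le, hhigh (r + 1) (by omega),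
        show r - 1 + (t - s) = r + (t - s) - 1 by omega, Nat.add_right_comm]
      exact W.active _ (by omega) (by omega)

def toPath (hab : a ≠ b) (hinj : ∀ i ≤ W.n, ∀ j ≤ W.n, W.f i = W.f j → i = j) : Path G a b where
  n := W.n
  npos := Nat.pos_of_ne_zero fun h => hab (W.first.symm.trans (h ▸ W.last))
  f i := W.f i
  first := W.first
  last := W.last
  adj i := W.adj i i.2
  inj i j h := Fin.ext (hinj i (Nat.lt_succ_iff.mp i.2) j (Nat.lt_succ_iff.mp j.2) h)

end ActiveWalk

lemma ActiveWalk.exists_path (W : ActiveWalk G C a b) (hab : a ≠ b) :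
    ∃ π : Path G a b, ¬ π.Blocked C := by
  obtain ⟨N, hW⟩ : ∃ N, W.n = N := ⟨_, rfl⟩
  induction N using Nat.strong_induction_on generalizing W with
  | _ N ih =>
  by_cases hinj : ∀ i ≤ W.n, ∀ j ≤ W.n, W.f i = W.f j → i = j
  · exact ⟨W.toPath hab hinj, ((W.toPath hab hinj).not_blocked_iff C).mpr fun t h₁ h₂ =>
      W.active t h₁ h₂⟩
  · push Not at hinj
    obtain ⟨i, hi, j, hj, heq, hne⟩ := hinj
    obtain ⟨W', hW'⟩ := hne.lt_or_gt.elim (fun h => W.exists_shorter hab h hj heq)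
      (fun h => W.exists_shorter hab h hi heq.symm)
    exact ih W'.n (hW ▸ hW') W' rfl

/-! ### Reachable walk states -/

/-- How a walk entered its current vertex `v`: it starts at `v`, or its last edge is `u → v`
(`head`) or `v → u` (`tail`). -/
inductive Entry
  | start
  | head
  | tail

def Entry.Via (G : DAG V) (u v : V) : Entry → Prop
  | .start => True
  | .head => G.Edge u v
  | .tail => G.Edge v u

/-- `G.Reach C a v e`: some walk from `a`, possibly revisiting vertices, enters `v` by `e` and
passes each intermediate vertex either as a collider in `C` or as a non-collider outside `C`
(colliders in `an(C)` alone do not count here, unlike in `ActiveTriple`). -/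
inductive Reach (G : DAG V) (C : Set V) (a : V) : V → Entry → Prop
  | start : Reach G C a a .start
  | forward {v w : V} {e : Entry} : Reach G C a v e → (e ≠ .start → v ∉ C) → G.Edge v w →
      Reach G C a w .head
  | backward {v w : V} {e : Entry} : Reach G C a v e → (e = .head → v ∈ C) →
      (e = .tail → v ∉ C) → G.Edge w v → Reach G C a w .tail

lemma Reach.eq_of_start {v : V} (h : G.Reach C a v .start) : v = a := by
  cases h
  rfl

/-- A collider in `an(C)` is passed by walking down to `C` and back up the same edges. -/
lemma Reach.tail_of_head {v c : V} (hvc : TransGen G.Edge v c) (hc : c ∈ C) :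
    G.Reach C a v .head → v ∉ C → G.Reach C a v .tail := by
  induction hvc using TransGen.head_induction_on with
  | single hvc =>
    exact fun h hv => .backward (.forward h (fun _ => hv) hvc) (fun _ => hc) (by simp) hvc
  | @head v m hvm _ ih =>
    intro h hv
    have hm := Reach.forward h (fun _ => hv) hvm
    by_cases hmC : m ∈ C
    · exact .backward hm (fun _ => hmC) (by simp) hvm
    · exact .backward (ih hm hmC) (by simp) (fun _ => hmC) hvm

lemma Reach.step {u v w : V} {e : Entry} (h : G.Reach C a v e) (hvia : e.Via G u v)
    (hvw : G.Adj v w) (hact : e ≠ .start → G.ActiveTriple C u v w) :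
    ∃ e', G.Reach C a w e' ∧ e'.Via G v w := by
  rcases hvw with hvw | hwv
  · exact ⟨.head, .forward h (fun he => (hact he).2 fun hc => edge_asymm hvw hc.2) hvw, hvw⟩
  refine ⟨.tail, ?_, hwv⟩
  cases e with
  | start => exact .backward h (by simp) (by simp) hwv
  | head =>
    rcases (hact (by simp)).1 ⟨hvia, hwv⟩ with hv | ⟨hv, c, hc, hvc⟩
    · exact .backward h (fun _ => hv) (by simp) hwv
    · exact .backward (h.tail_of_head hvc hc hv) (by simp) (fun _ => hv) hwv
  | tail =>
    have hv := (hact (by simp)).2 fun hc => edge_asymm hvia hc.1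
    exact .backward h (by simp) (fun _ => hv) hwv

lemma ActiveWalk.exists_reach (W : ActiveWalk G C a b) : ∃ e, G.Reach C a b e := by
  have key : ∀ t ≤ W.n, ∃ e, G.Reach C a (W.f t) e ∧ e.Via G (W.f (t - 1)) (W.f t) ∧
      (t = 0 → e = .start) := by
    intro t
    induction t with
    | zero => exact fun _ => ⟨.start, by rw [W.first]; exact .start, trivial, fun _ => rfl⟩
    | succ t ih =>
      intro ht
      obtain ⟨e, h, hvia, h0⟩ := ih (by omega)
      obtain ⟨e', h', hvia'⟩ := h.step hvia (W.adj t (by omega)) fun he =>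
        W.active t (Nat.pos_of_ne_zero fun ht => he (h0 ht)) (by omega)
      exact ⟨e', h', by simpa using hvia', by simp⟩
  obtain ⟨e, h, -⟩ := key W.n le_rfl
  exact ⟨e, W.last ▸ h⟩

lemma Reach.exists_activeWalk {v : V} {e : Entry} (h : G.Reach C a v e) :
    ∃ W : ActiveWalk G C a v, (e = .start → W.n = 0) ∧ e.Via G (W.f (W.n - 1)) v := by
  induction h with
  | start => exact ⟨ActiveWalk.nil G C a, fun _ => rfl, trivial⟩
  | @forward v w e _ hv hvw ih =>
    obtain ⟨W, h0, -⟩ := ih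
    refine ⟨W.snoc hvw.adj fun hn => activeTriple_of_edge_out hvw (hv ?_), by simp, ?_⟩
    · rintro rfl
      exact hn.ne' (h0 rfl)
    · simpa [Entry.Via] using hvw
  | @backward v w e _ hhead htail hwv ih =>
    obtain ⟨W, h0, hvia⟩ := ih
    refine ⟨W.snoc hwv.adj.symm fun hn => ?_, by simp, ?_⟩
    · cases e with
      | start => exact absurd (h0 rfl) hn.ne'
      | head => exact ⟨fun _ => Or.inl (hhead rfl), fun hnc => absurd ⟨hvia, hwv⟩ hnc⟩
      | tail => exact (activeTriple_of_edge_out hvia (htail rfl)).symm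
    · simpa [Entry.Via] using hwv

lemma exists_unblocked_path_iff_reach (hab : a ≠ b) :
    (∃ π : Path G a b, ¬ π.Blocked C) ↔ ∃ e, G.Reach C a b e := by
  refine ⟨fun ⟨π, hπ⟩ => (π.toActiveWalk hπ).exists_reach, fun ⟨e, h⟩ => ?_⟩
  obtain ⟨W, -⟩ := h.exists_activeWalk
  exact W.exists_path hab

lemma dSep_iff_forall_not_reach {A B : Set V} (hAB : Disjoint A B) :
    G.dSep A B C ↔ ∀ a ∈ A, ∀ b ∈ B, ∀ e, ¬ G.Reach C a b e := by
  refine forall₂_congr fun a ha => forall₂_congr fun b hb => ?_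
  have hab : a ≠ b := fun h => Set.disjoint_left.mp hAB ha (h ▸ hb)
  have h := not_congr (exists_unblocked_path_iff_reach (G := G) (C := C) hab)
  simpa only [not_exists, not_not] using h

lemma dSep_singleton_iff (hab : a ≠ b) : G.dSep {a} {b} C ↔ ∀ e, ¬ G.Reach C a b e := by
  simp [dSep_iff_forall_not_reach (Set.disjoint_singleton.mpr hab)]

lemma dSep.symm {A B : Set V} (h : G.dSep A B C) : G.dSep B A C := by
  intro b hb a ha π
  by_contra hπ
  obtain ⟨π', hπ'⟩ := (π.toActiveWalk hπ).reverse.exists_path π.ne.symm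
  exact hπ' (h a ha b hb π')

/-! ### Separating sets and Markov equivalence -/

lemma not_dSep_of_adj (h : G.Adj a b) (C : Set V) : ¬ G.dSep {a} {b} C := by
  obtain ⟨e, he, -⟩ := (Reach.start (G := G) (C := C)).step (u := a) trivial h (absurd rfl)
  exact fun hd => (dSep_singleton_iff (ne_of_adj h)).mp hd e he

lemma not_dSep_of_adj_adj {k : V} (hak : G.Adj a k) (hkb : G.Adj k b) (hab : a ≠ b)
    (hcol : G.Edge a k ∧ G.Edge b k → k ∈ C) (hnc : ¬ (G.Edge a k ∧ G.Edge b k) → k ∉ C) :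
    ¬ G.dSep {a} {b} C := by
  obtain ⟨e, he, hvia⟩ := (Reach.start (G := G) (C := C)).step (u := a) trivial hak (absurd rfl)
  obtain ⟨e', he', -⟩ := he.step hvia hkb fun _ => ⟨fun hc => Or.inl (hcol hc), hnc⟩
  exact fun hd => (dSep_singleton_iff hab).mp hd e' he'

lemma Reach.cases_of_parents {v : V} {e : Entry} (h : G.Reach {w | G.Edge w a} a v e) :
    (e = .start ∧ v = a) ∨ (e = .tail ∧ G.Edge v a) ∨ (e = .head ∧ TransGen G.Edge a v) := by
  induction h with
  | start => exact Or.inl ⟨rfl, rfl⟩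
  | forward _ hv hvw ih =>
    rcases ih with ⟨rfl, rfl⟩ | ⟨rfl, hva⟩ | ⟨rfl, hav⟩
    · exact Or.inr (Or.inr ⟨rfl, .single hvw⟩)
    · exact absurd hva (hv (by simp))
    · exact Or.inr (Or.inr ⟨rfl, hav.tail hvw⟩)
  | backward _ hhead htail hwv ih =>
    rcases ih with ⟨rfl, rfl⟩ | ⟨rfl, hva⟩ | ⟨rfl, hav⟩
    · exact Or.inr (Or.inl ⟨rfl, hwv⟩)
    · exact absurd hva (htail rfl)
    · exact absurd (hav.tail (hhead rfl)) (G.acyclic _)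

lemma dSep_parents (hab : a ≠ b) (hadj : ¬ G.Adj a b) (hanc : ¬ TransGen G.Edge a b) :
    G.dSep {a} {b} {w | G.Edge w a} := by
  refine (dSep_singleton_iff hab).mpr fun e h => ?_
  rcases h.cases_of_parents with ⟨-, rfl⟩ | ⟨-, hba⟩ | ⟨-, hab'⟩
  · exact hab rfl
  · exact hadj hba.adj.symm
  · exact hanc hab'

lemma exists_dSep_of_not_adj (hab : a ≠ b) (hadj : ¬ G.Adj a b) :
    ∃ C, a ∉ C ∧ b ∉ C ∧ G.dSep {a} {b} C := by
  by_cases hanc : TransGen G.Edge a b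
  · have hanc' : ¬ TransGen G.Edge b a := fun h => G.acyclic a (hanc.trans h)
    exact ⟨{w | G.Edge w b}, fun h => hadj h.adj, G.edge_irrefl b,
      (dSep_parents hab.symm (fun h => hadj h.symm) hanc').symm⟩
  · exact ⟨{w | G.Edge w a}, G.edge_irrefl a, fun h => hadj h.adj.symm,
      dSep_parents hab hadj hanc⟩

lemma MarkovEquiv.symm (h : MarkovEquiv G₁ G₂) : MarkovEquiv G₂ G₁ :=
  fun A B C hAB hAC hBC => (h A B C hAB hAC hBC).symm

lemma MarkovEquiv.trans {G₃ : DAG V} (h₁₂ : MarkovEquiv G₁ G₂) (h₂₃ : MarkovEquiv G₂ G₃) :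
    MarkovEquiv G₁ G₃ :=
  fun A B C hAB hAC hBC => (h₁₂ A B C hAB hAC hBC).trans (h₂₃ A B C hAB hAC hBC)

lemma MarkovEquiv.dSep_singleton_iff (h : MarkovEquiv G₁ G₂) (hab : a ≠ b) (ha : a ∉ C)
    (hb : b ∉ C) : G₁.dSep {a} {b} C ↔ G₂.dSep {a} {b} C :=
  h _ _ _ (Set.disjoint_singleton.mpr hab) (Set.disjoint_singleton_left.mpr ha)
    (Set.disjoint_singleton_left.mpr hb)

lemma MarkovEquiv.adj (h : MarkovEquiv G₁ G₂) (hadj : G₁.Adj a b) : G₂.Adj a b := by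
  by_contra h₂
  obtain ⟨C, ha, hb, hd⟩ := exists_dSep_of_not_adj (ne_of_adj hadj) h₂
  exact not_dSep_of_adj hadj C ((h.dSep_singleton_iff (ne_of_adj hadj) ha hb).mpr hd)

/-- A set separating `i` and `j` in `G₂` must contain `k` if `i ∼ k ∼ j` is a non-collider there,
and then it cannot separate them in `G₁` if it is a collider there. -/
lemma MarkovEquiv.isCollider (h : MarkovEquiv G₁ G₂) {i k j : V} (hcol : G₁.IsCollider i k j) :
    G₂.IsCollider i k j := by
  obtain ⟨⟨hij, hik, hjk, hAik, hAjk, hnadj⟩, hik₁, hjk₁⟩ := hcol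
  have hnadj₂ : ¬ G₂.Adj i j := fun h' => hnadj (h.symm.adj h')
  refine ⟨⟨hij, hik, hjk, h.adj hAik, h.adj hAjk, hnadj₂⟩, ?_⟩
  by_contra hnc
  obtain ⟨C, hi, hj, hd₂⟩ := exists_dSep_of_not_adj hij hnadj₂
  have hk : k ∈ C := by
    by_contra hk
    exact not_dSep_of_adj_adj (h.adj hAik) (h.adj hAjk).symm hij (absurd · hnc) (fun _ => hk) hd₂
  exact not_dSep_of_adj_adj hAik hAjk.symm hij (fun _ => hk) (absurd ⟨hik₁, hjk₁⟩)
    ((h.dSep_singleton_iff hij hi hj).mpr hd₂)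

/-! ### Reversing a covered edge -/

/-- Chickering's covered edges. -/
def Covered (G : DAG V) (x y : V) : Prop :=
  G.Edge x y ∧ ∀ w, G.Edge w x ↔ G.Edge w y ∧ w ≠ x

def IsFlip (G H : DAG V) (x y : V) : Prop :=
  ∀ u v, H.Edge u v ↔ (G.Edge u v ∧ ¬ (u = x ∧ v = y)) ∨ (u = y ∧ v = x)

lemma Covered.ne (hcov : G.Covered x y) : x ≠ y := ne_of_edge hcov.1

lemma Covered.edge_of_edge_left {w : V} (hcov : G.Covered x y) (h : G.Edge w x) :
    G.Edge w y :=
  ((hcov.2 w).mp h).1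

lemma Covered.edge_left_of_edge {w : V} (hcov : G.Covered x y) (h : G.Edge w y) (hw : w ≠ x) :
    G.Edge w x :=
  (hcov.2 w).mpr ⟨h, hw⟩

lemma IsFlip.edge {u v : V} (hf : IsFlip G H x y) (h : G.Edge u v) (hne : ¬ (u = x ∧ v = y)) :
    H.Edge u v :=
  (hf u v).mpr (Or.inl ⟨h, hne⟩)

lemma IsFlip.edge_yx (hf : IsFlip G H x y) : H.Edge y x := (hf y x).mpr (Or.inr ⟨rfl, rfl⟩)

lemma IsFlip.not_edge_xy (hf : IsFlip G H x y) (hcov : G.Covered x y) : ¬ H.Edge x y := by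
  rintro h
  rcases (hf x y).mp h with ⟨-, h⟩ | ⟨h, -⟩
  · exact h ⟨rfl, rfl⟩
  · exact hcov.ne h

lemma IsFlip.symm (hf : IsFlip G H x y) (hcov : G.Covered x y) : IsFlip H G y x := by
  intro u v
  by_cases huv : u = x ∧ v = y
  · obtain ⟨rfl, rfl⟩ := huv
    simp [hcov.1]
  · rw [hf u v]
    constructor
    · intro h
      exact Or.inl ⟨Or.inl ⟨h, huv⟩, fun ⟨hu, hv⟩ => edge_asymm hcov.1 (hu ▸ hv ▸ h)⟩
    · rintro (⟨⟨h, -⟩ | ⟨rfl, rfl⟩, hne⟩ | ⟨rfl, rfl⟩)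
      exacts [h, absurd ⟨rfl, rfl⟩ hne, absurd ⟨rfl, rfl⟩ huv]

lemma IsFlip.covered (hf : IsFlip G H x y) (hcov : G.Covered x y) : H.Covered y x := by
  refine ⟨hf.edge_yx, fun w => ?_⟩
  rw [hf w y, hf w x]
  constructor
  · rintro (⟨hwy, hw⟩ | ⟨rfl, h⟩)
    · have hwx : w ≠ x := fun h => hw ⟨h, rfl⟩
      exact ⟨Or.inl ⟨hcov.edge_left_of_edge hwy hwx, fun h => hwx h.1⟩,
        fun h => G.edge_irrefl _ (h ▸ hwy)⟩
    · exact absurd h.symm hcov.ne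
  · rintro ⟨⟨hwx, -⟩ | ⟨rfl, -⟩, hw⟩
    · exact Or.inl ⟨hcov.edge_of_edge_left hwx, fun h => ne_of_edge hwx h.1⟩
    · exact absurd rfl hw

lemma IsFlip.adj (hf : IsFlip G H x y) {u v : V} (h : G.Adj u v) : H.Adj u v := by
  rcases h with h | h
  · by_cases huv : u = x ∧ v = y
    · obtain ⟨rfl, rfl⟩ := huv
      exact hf.edge_yx.adj.symm
    · exact (hf.edge h huv).adj
  · by_cases hvu : v = x ∧ u = y
    · obtain ⟨rfl, rfl⟩ := hvu
      exact hf.edge_yx.adj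
    · exact (hf.edge h hvu).adj.symm

lemma IsFlip.adj_iff (hf : IsFlip G H x y) (hcov : G.Covered x y) {u v : V} :
    H.Adj u v ↔ G.Adj u v :=
  ⟨(hf.symm hcov).adj, hf.adj⟩

lemma IsFlip.isCollider (hf : IsFlip G H x y) (hcov : G.Covered x y) {i k j : V}
    (h : G.IsCollider i k j) : H.IsCollider i k j := by
  obtain ⟨⟨hij, hik, hjk, hAik, hAjk, hnadj⟩, hik', hjk'⟩ := h
  refine ⟨⟨hij, hik, hjk, (hf.adj_iff hcov).mpr hAik, (hf.adj_iff hcov).mpr hAjk,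
    fun h => hnadj ((hf.adj_iff hcov).mp h)⟩, hf.edge hik' ?_, hf.edge hjk' ?_⟩
  · rintro ⟨rfl, rfl⟩
    exact hnadj (hcov.edge_left_of_edge hjk' hij.symm).adj.symm
  · rintro ⟨rfl, rfl⟩
    exact hnadj (hcov.edge_left_of_edge hik' hij).adj

lemma IsFlip.isCollider_iff (hf : IsFlip G H x y) (hcov : G.Covered x y) {i k j : V} :
    H.IsCollider i k j ↔ G.IsCollider i k j :=
  ⟨(hf.symm hcov).isCollider (hf.covered hcov), hf.isCollider hcov⟩

/-- A cycle after the flip would have to use `y → x` and return from `x` to `y` along old edges,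
ending with some `w → y`, `w ≠ x`; but then `w → x`, closing a cycle in `G`. -/
lemma flip_acyclic (hcov : G.Covered x y) (c : V) :
    ¬ TransGen (fun u v => (G.Edge u v ∧ ¬ (u = x ∧ v = y)) ∨ (u = y ∧ v = x)) c c := by
  set r : V → V → Prop := fun u v => G.Edge u v ∧ ¬ (u = x ∧ v = y)
  have hr : ∀ {u v}, r u v → G.Edge u v := fun h => h.1
  have hsplit : ∀ {u v}, TransGen (fun u v => r u v ∨ (u = y ∧ v = x)) u v →
      TransGen r u v ∨ (ReflTransGen r u y ∧ ReflTransGen r x v) := by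
    intro u v h
    induction h with
    | single h =>
      rcases h with h | ⟨rfl, rfl⟩
      exacts [Or.inl (.single h), Or.inr ⟨.refl, .refl⟩]
    | tail _ h ih =>
      rcases h with h | ⟨rfl, rfl⟩ <;> rcases ih with ih | ⟨ih₁, ih₂⟩
      exacts [Or.inl (ih.tail h), Or.inr ⟨ih₁, ih₂.tail h⟩, Or.inr ⟨ih.to_reflTransGen, .refl⟩,
        Or.inr ⟨ih₁, .refl⟩]
  have hxy : ¬ ReflTransGen r x y := by
    intro h
    rcases h.cases_tail with h | ⟨w, hxw, hw, hne⟩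
    · exact hcov.ne h.symm
    · have hwx := hcov.edge_left_of_edge hw fun h => hne ⟨h, rfl⟩
      exact G.acyclic x (TransGen.tail' (ReflTransGen.mono (fun _ _ => hr) _ _ hxw) hwx)
  intro h
  rcases hsplit h with h | ⟨h₁, h₂⟩
  · exact G.acyclic c (TransGen.mono (fun _ _ => hr) _ _ h)
  · exact hxy (h₂.trans h₁)

def flip (G : DAG V) (hcov : G.Covered x y) : DAG V where
  Edge u v := (G.Edge u v ∧ ¬ (u = x ∧ v = y)) ∨ (u = y ∧ v = x)
  acyclic := flip_acyclic hcov

lemma isFlip_flip (hcov : G.Covered x y) : IsFlip G (G.flip hcov) x y := fun _ _ => Iff.rfl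

/-- What `H` offers in place of the state "`x` entered by `tail` from `y`" of a walk in `G`, which
has no counterpart once `x → y` is reversed: the moves out of `x` can be made from `x` or `y`. -/
def FlipProxy (H : DAG V) (C : Set V) (a x y : V) : Prop :=
  x = a ∨ H.Reach C a x .tail ∨
    (H.Reach C a x .head ∧
      ((y ∈ C ∧ H.Reach C a y .head) ∨ (y ∉ C ∧ (y = a ∨ H.Reach C a y .tail))))

/-- Invariant for simulating a walk in `G` by walks in `H`, the flip of `x → y`: each state is
reached in `H`, except that "`y` entered by `head` from `x`" and "`x` entered by `tail` from `y`"
are replaced by `FlipProxy`. -/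
def FlipSim (H : DAG V) (C : Set V) (a x y v : V) (e : Entry) : Prop :=
  (H.Reach C a v e ∨ (v = y ∧ e = .head ∧ x ∉ C ∧ FlipProxy H C a x y) ∨
      (v = x ∧ e = .tail ∧ FlipProxy H C a x y)) ∧
    (v = x → e = .head → H.Reach C a y .head) ∧
    (v = y → e = .head → y ∈ C → FlipProxy H C a x y)

namespace FlipProxy

variable {w : V}

lemma reach_head_of_edge_x (hf : IsFlip G H x y) (hp : FlipProxy H C a x y) (hx : x ∉ C)
    (hxw : G.Edge x w) (hw : w ≠ y) : H.Reach C a w .head := by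
  have hH : H.Edge x w := hf.edge hxw fun h => hw h.2
  rcases hp with rfl | hxt | ⟨hxh, -⟩
  · exact .forward .start (absurd rfl) hH
  · exact .forward hxt (fun _ => hx) hH
  · exact .forward hxh (fun _ => hx) hH

lemma reach_tail_of_edge_x (hcov : G.Covered x y) (hf : IsFlip G H x y)
    (hp : FlipProxy H C a x y) (hx : x ∉ C) (hwx : G.Edge w x) : H.Reach C a w .tail := by
  have hwx' : H.Edge w x := hf.edge hwx fun h => hcov.ne h.2
  have hwy : H.Edge w y := hf.edge (hcov.edge_of_edge_left hwx) fun h => ne_of_edge hwx h.1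
  rcases hp with rfl | hxt | ⟨-, ⟨hy, hyh⟩ | ⟨hy, rfl | hyt⟩⟩
  · exact .backward .start (by simp) (by simp) hwx'
  · exact .backward hxt (by simp) (fun _ => hx) hwx'
  · exact .backward hyh (fun _ => hy) (by simp) hwy
  · exact .backward .start (by simp) (by simp) hwy
  · exact .backward hyt (by simp) (fun _ => hy) hwy

lemma exists_reach_x (hp : FlipProxy H C a x y) (hxa : x ≠ a) : ∃ e, H.Reach C a x e := by
  rcases hp with rfl | hxt | ⟨hxh, -⟩
  exacts [absurd rfl hxa, ⟨_, hxt⟩, ⟨_, hxh⟩]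

lemma reach_head_of_edge_y (hcov : G.Covered x y) (hf : IsFlip G H x y)
    (hp : FlipProxy H C a x y) (hx : x ∉ C) (hy : y ∉ C) (hyw : G.Edge y w) :
    H.Reach C a w .head := by
  have hH : H.Edge y w := hf.edge hyw fun h => hcov.ne h.1.symm
  rcases hp with rfl | hxt | ⟨-, ⟨hy', -⟩ | ⟨-, rfl | hyt⟩⟩
  · exact .forward (.backward .start (by simp) (by simp) hf.edge_yx) (fun _ => hy) hH
  · exact .forward (.backward hxt (by simp) (fun _ => hx) hf.edge_yx) (fun _ => hy) hH
  · exact absurd hy' hy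
  · exact .forward .start (absurd rfl) hH
  · exact .forward hyt (fun _ => hy) hH

lemma reach_tail_of_edge_y (hcov : G.Covered x y) (hf : IsFlip G H x y)
    (hp : FlipProxy H C a x y) (hx : x ∉ C) (hy : y ∈ C) (hwy : G.Edge w y) (hw : w ≠ x) :
    H.Reach C a w .tail := by
  have hwx : H.Edge w x := hf.edge (hcov.edge_left_of_edge hwy hw) fun h => hcov.ne h.2
  have hwy' : H.Edge w y := hf.edge hwy fun h => hw h.1
  rcases hp with rfl | hxt | ⟨-, ⟨-, hyh⟩ | ⟨hy', -⟩⟩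
  · exact .backward .start (by simp) (by simp) hwx
  · exact .backward hxt (by simp) (fun _ => hx) hwx
  · exact .backward hyh (fun _ => hy) (by simp) hwy'
  · exact absurd hy hy'

lemma exists_reach_y (hf : IsFlip G H x y) (hp : FlipProxy H C a x y) (hx : x ∉ C)
    (hya : y ≠ a) : ∃ e, H.Reach C a y e := by
  rcases hp with rfl | hxt | ⟨-, ⟨-, hyh⟩ | ⟨-, rfl | hyt⟩⟩
  · exact ⟨_, .backward .start (by simp) (by simp) hf.edge_yx⟩
  · exact ⟨_, .backward hxt (by simp) (fun _ => hx) hf.edge_yx⟩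
  · exact ⟨_, hyh⟩
  · exact absurd rfl hya
  · exact ⟨_, hyt⟩

end FlipProxy

namespace FlipSim

variable {v w : V} {e : Entry}

lemma start : FlipSim H C a x y a .start :=
  ⟨Or.inl .start, fun _ h => absurd h (by simp), fun _ h => absurd h (by simp)⟩

lemma forward_of_reach (hcov : G.Covered x y) (hf : IsFlip G H x y) (ha : a ∉ C)
    (hsim : H.Reach C a v e) (hxh : v = x → e = .head → H.Reach C a y .head)
    (hv : e ≠ .start → v ∉ C) (hvw : G.Edge v w) : FlipSim H C a x y w .head := by
  by_cases htrav : v = x ∧ w = y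
  · obtain ⟨rfl, rfl⟩ := htrav
    refine ⟨?_, fun h => absurd h hcov.ne.symm, fun _ _ hy => ?_⟩
    · cases e with
      | start =>
        obtain rfl := hsim.eq_of_start
        exact Or.inr (Or.inl ⟨rfl, rfl, ha, Or.inl rfl⟩)
      | head => exact Or.inl (hxh rfl rfl)
      | tail => exact Or.inr (Or.inl ⟨rfl, rfl, hv (by simp), Or.inr (Or.inl hsim)⟩)
    · cases e with
      | start => exact Or.inl hsim.eq_of_start
      | head => exact Or.inr (Or.inr ⟨hsim, Or.inl ⟨hy, hxh rfl rfl⟩⟩)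
      | tail => exact Or.inr (Or.inl hsim)
  refine ⟨Or.inl (.forward hsim hv (hf.edge hvw htrav)), fun hwx _ => ?_, fun hwy _ hy => ?_⟩
  · rw [hwx] at hvw
    have hvx : v ≠ x := ne_of_edge hvw
    exact .forward hsim hv (hf.edge (hcov.edge_of_edge_left hvw) fun h => hvx h.1)
  · rw [hwy] at hvw htrav
    have hvx : v ≠ x := fun h => htrav ⟨h, rfl⟩
    have hxh : H.Reach C a x .head :=
      .forward hsim hv (hf.edge (hcov.edge_left_of_edge hvw hvx) fun h => hcov.ne h.2)
    exact Or.inr (Or.inr ⟨hxh, Or.inl ⟨hy, .forward hsim hv (hf.edge hvw fun h => hvx h.1)⟩⟩)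

lemma forward (hcov : G.Covered x y) (hf : IsFlip G H x y) (ha : a ∉ C)
    (hs : FlipSim H C a x y v e) (hv : e ≠ .start → v ∉ C) (hvw : G.Edge v w) :
    FlipSim H C a x y w .head := by
  obtain ⟨hsim | ⟨hvy, rfl, hx, hp⟩ | ⟨hvx, rfl, hp⟩, hxh, -⟩ := hs
  · exact forward_of_reach hcov hf ha hsim hxh hv hvw
  · subst v
    have hy : y ∉ C := hv (by simp)
    refine ⟨Or.inl (hp.reach_head_of_edge_y hcov hf hx hy hvw), fun hwx => ?_, fun hwy => ?_⟩
    · exact absurd (hwx ▸ hvw) (edge_asymm hcov.1)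
    · exact absurd (hwy ▸ hvw) (G.edge_irrefl _)
  · subst v
    have hx : x ∉ C := hv (by simp)
    by_cases hw : w = y
    · subst hw
      exact ⟨Or.inr (Or.inl ⟨rfl, rfl, hx, hp⟩), fun h => absurd h hcov.ne.symm, fun _ _ _ => hp⟩
    · refine ⟨Or.inl (hp.reach_head_of_edge_x hf hx hvw hw), fun hwx => ?_, fun h => absurd h hw⟩
      exact absurd (hwx ▸ hvw) (G.edge_irrefl _)

lemma backward (hcov : G.Covered x y) (hf : IsFlip G H x y) (ha : a ∉ C)
    (hs : FlipSim H C a x y v e) (hhead : e = .head → v ∈ C) (htail : e = .tail → v ∉ C)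
    (hwv : G.Edge w v) : FlipSim H C a x y w .tail := by
  refine ⟨?_, fun _ h => absurd h (by simp), fun _ h => absurd h (by simp)⟩
  obtain ⟨hsim | ⟨hvy, rfl, hx, hp⟩ | ⟨hvx, rfl, hp⟩, -, hyh⟩ := hs
  · by_cases htrav : w = x ∧ v = y
    · obtain ⟨rfl, rfl⟩ := htrav
      refine Or.inr (Or.inr ⟨rfl, rfl, ?_⟩)
      cases e with
      | start =>
        obtain rfl := hsim.eq_of_start
        exact Or.inr (Or.inr ⟨.forward hsim (absurd rfl) hf.edge_yx, Or.inr ⟨ha, Or.inl rfl⟩⟩)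
      | head => exact hyh rfl rfl (hhead rfl)
      | tail =>
        have hy := htail rfl
        exact Or.inr (Or.inr ⟨.forward hsim (fun _ => hy) hf.edge_yx, Or.inr ⟨hy, Or.inr hsim⟩⟩)
    · exact Or.inl (.backward hsim hhead htail (hf.edge hwv htrav))
  · subst v
    by_cases hw : w = x
    · exact Or.inr (Or.inr ⟨hw, rfl, hp⟩)
    · exact Or.inl (hp.reach_tail_of_edge_y hcov hf hx (hhead rfl) hwv hw)
  · subst v
    exact Or.inl (hp.reach_tail_of_edge_x hcov hf (htail rfl) hwv)

end FlipSim

lemma Reach.flipSim (hcov : G.Covered x y) (hf : IsFlip G H x y) (ha : a ∉ C) {v : V}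
    {e : Entry} (h : G.Reach C a v e) : FlipSim H C a x y v e := by
  induction h with
  | start => exact .start
  | forward _ hv hvw ih => exact ih.forward hcov hf ha hv hvw
  | backward _ hhead htail hwv ih => exact ih.backward hcov hf ha hhead htail hwv

lemma Reach.exists_reach_of_isFlip (hcov : G.Covered x y) (hf : IsFlip G H x y) (ha : a ∉ C)
    {b : V} (hab : a ≠ b) {e : Entry} (h : G.Reach C a b e) : ∃ e', H.Reach C a b e' := by
  obtain ⟨hsim | ⟨rfl, -, hx, hp⟩ | ⟨rfl, -, hp⟩, -, -⟩ := h.flipSim hcov hf ha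
  exacts [⟨e, hsim⟩, hp.exists_reach_y hf hx hab.symm, hp.exists_reach_x hab.symm]

lemma IsFlip.dSep (hcov : G.Covered x y) (hf : IsFlip G H x y) {A B : Set V}
    (hAB : Disjoint A B) (hAC : Disjoint A C) (h : H.dSep A B C) : G.dSep A B C := by
  rw [dSep_iff_forall_not_reach hAB] at h ⊢
  intro a ha b hb e hab
  have hne : a ≠ b := fun h => Set.disjoint_left.mp hAB ha (h ▸ hb)
  obtain ⟨e', h'⟩ := hab.exists_reach_of_isFlip hcov hf (Set.disjoint_left.mp hAC ha) hne
  exact h a ha b hb e' h'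

lemma IsFlip.markovEquiv (hcov : G.Covered x y) (hf : IsFlip G H x y) : MarkovEquiv G H :=
  fun _ _ _ hAB hAC _ =>
    ⟨(hf.symm hcov).dSep (hf.covered hcov) hAB hAC, hf.dSep hcov hAB hAC⟩

/-! ### Chickering's transformation -/

section Finite

variable [Fintype V]

open Classical in
noncomputable def ancestorCount (G : DAG V) (v : V) : ℕ :=
  (Finset.univ.filter fun u => TransGen G.Edge u v).card

lemma ancestorCount_lt_of_edge {u v : V} (h : G.Edge u v) :
    G.ancestorCount u < G.ancestorCount v := by
  refine Finset.card_lt_card ((Finset.ssubset_iff_of_subset fun w hw => ?_).mpr ⟨u, ?_, ?_⟩)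
  · simp only [Finset.mem_filter, Finset.mem_univ, true_and] at hw ⊢
    exact hw.tail h
  · simpa using TransGen.single h
  · simpa using G.acyclic u

open Classical in
noncomputable def reversedEdges (G₁ G₂ : DAG V) : Finset (V × V) :=
  Finset.univ.filter fun p => G₁.Edge p.1 p.2 ∧ ¬ G₂.Edge p.1 p.2

lemma mem_reversedEdges {p : V × V} :
    p ∈ reversedEdges G₁ G₂ ↔ G₁.Edge p.1 p.2 ∧ ¬ G₂.Edge p.1 p.2 := by
  simp [reversedEdges]

lemma eq_of_reversedEdges_eq_empty (hskel : ∀ i j, G₁.Adj i j ↔ G₂.Adj i j)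
    (h : reversedEdges G₁ G₂ = ∅) : G₁ = G₂ := by
  have hsub : ∀ u v, G₁.Edge u v → G₂.Edge u v := fun u v huv => by
    by_contra h₂
    exact Finset.notMem_empty (u, v) (h ▸ mem_reversedEdges.mpr ⟨huv, h₂⟩)
  have hedge : G₁.Edge = G₂.Edge := by
    ext u v
    refine ⟨hsub u v, fun huv => ?_⟩
    exact ((hskel u v).mpr huv.adj).resolve_right fun hvu => edge_asymm huv (hsub v u hvu)
  cases G₁
  cases G₂
  cases hedge
  rfl

lemma card_reversedEdges_lt_of_isFlip (hcov : G₁.Covered x y) (hf : IsFlip G₁ H x y)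
    (hyx : G₂.Edge y x) (hxy : ¬ G₂.Edge x y) :
    (reversedEdges H G₂).card < (reversedEdges G₁ G₂).card := by
  refine Finset.card_lt_card ((Finset.ssubset_iff_of_subset fun p hp => ?_).mpr
    ⟨(x, y), mem_reversedEdges.mpr ⟨hcov.1, hxy⟩, fun h => hf.not_edge_xy hcov
      (mem_reversedEdges.mp h).1⟩)
  obtain ⟨hH, h₂⟩ := mem_reversedEdges.mp hp
  rcases (hf _ _).mp hH with ⟨hG, -⟩ | ⟨h₁, h₂'⟩
  · exact mem_reversedEdges.mpr ⟨hG, h₂⟩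
  · exact absurd (h₁ ▸ h₂' ▸ hyx) h₂

/-- If `y` is a lowest head of a reversed edge and `x` a highest tail of a reversed edge into `y`,
then `x → y` is covered: a parent of one endpoint that is not adjacent to the other would create
a v-structure in one graph only, or a reversed edge lower than `y` or higher than `x`. -/
lemma covered_of_extremal (hskel : ∀ i j, G₁.Adj i j ↔ G₂.Adj i j)
    (hcol : ∀ i k j, G₁.IsCollider i k j ↔ G₂.IsCollider i k j) (hxy : G₁.Edge x y)
    (hxy₂ : ¬ G₂.Edge x y)
    (hmin : ∀ u v, G₁.Edge u v → ¬ G₂.Edge u v → G₁.ancestorCount y ≤ G₁.ancestorCount v)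
    (hmax : ∀ u, G₁.Edge u y → ¬ G₂.Edge u y → G₁.ancestorCount u ≤ G₁.ancestorCount x) :
    G₁.Covered x y := by
  have hyx₂ : G₂.Edge y x := ((hskel x y).mp hxy.adj).resolve_left hxy₂
  refine ⟨hxy, fun w => ⟨fun hwx => ⟨?_, ne_of_edge hwx⟩, fun ⟨hwy, hwx⟩ => ?_⟩⟩
  · have hwy : w ≠ y := fun h => edge_asymm hxy (h ▸ hwx)
    have hadj : G₁.Adj w y := by
      by_contra hnadj
      by_cases hwx₂ : G₂.Edge w x
      · have hcol₂ : G₂.IsCollider w x y := ⟨⟨hwy, ne_of_edge hwx, (ne_of_edge hxy).symm,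
          (hskel w x).mp hwx.adj, (hskel y x).mp hxy.adj.symm,
          fun h => hnadj ((hskel w y).mpr h)⟩, hwx₂, hyx₂⟩
        exact edge_asymm hxy ((hcol w x y).mpr hcol₂).2.2
      · have := hmin w x hwx hwx₂
        have := ancestorCount_lt_of_edge hxy
        omega
    exact hadj.resolve_right fun hyw => G₁.acyclic w (((TransGen.single hwx).tail hxy).tail hyw)
  · have hadj : G₁.Adj w x := by
      by_contra hnadj
      have hcol₁ : G₁.IsCollider x y w := ⟨⟨fun h => hwx h.symm, ne_of_edge hxy,
        ne_of_edge hwy, hxy.adj, hwy.adj, fun h => hnadj h.symm⟩, hxy, hwy⟩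
      exact hxy₂ ((hcol x y w).mp hcol₁).2.1
    refine hadj.resolve_right fun hxw => ?_
    by_cases hxw₂ : G₂.Edge x w
    · have hwy₂ : ¬ G₂.Edge w y := fun h =>
        G₂.acyclic y (((TransGen.single hyx₂).tail hxw₂).tail h)
      have := hmax w hwy hwy₂
      have := ancestorCount_lt_of_edge hxw
      omega
    · have := hmin x w hxw hxw₂
      have := ancestorCount_lt_of_edge hwy
      omega

lemma exists_covered_of_reversedEdges_nonempty (hskel : ∀ i j, G₁.Adj i j ↔ G₂.Adj i j)
    (hcol : ∀ i k j, G₁.IsCollider i k j ↔ G₂.IsCollider i k j)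
    (hne : (reversedEdges G₁ G₂).Nonempty) :
    ∃ x y, ¬ G₂.Edge x y ∧ G₁.Covered x y := by
  classical
  obtain ⟨p, hp, hpmin⟩ := Finset.exists_min_image _ (fun p => G₁.ancestorCount p.2) hne
  obtain ⟨⟨x, y⟩, hq, hqmax⟩ := Finset.exists_max_image
    ((reversedEdges G₁ G₂).filter fun q => q.2 = p.2) (fun q => G₁.ancestorCount q.1)
    ⟨p, Finset.mem_filter.mpr ⟨hp, rfl⟩⟩
  obtain ⟨hq, rfl⟩ := Finset.mem_filter.mp hq
  obtain ⟨hxy, hxy₂⟩ := mem_reversedEdges.mp hq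
  refine ⟨x, p.2, hxy₂, covered_of_extremal hskel hcol hxy hxy₂
    (fun u v huv huv₂ => hpmin (u, v) (mem_reversedEdges.mpr ⟨huv, huv₂⟩))
    (fun u huy huy₂ => hqmax (u, p.2) (Finset.mem_filter.mpr
      ⟨mem_reversedEdges.mpr ⟨huy, huy₂⟩, rfl⟩))⟩

lemma markovEquiv_of_adj_iff_of_isCollider_iff (hskel : ∀ i j, G₁.Adj i j ↔ G₂.Adj i j)
    (hcol : ∀ i k j, G₁.IsCollider i k j ↔ G₂.IsCollider i k j) : MarkovEquiv G₁ G₂ := by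
  obtain ⟨N, hN⟩ : ∃ N, (reversedEdges G₁ G₂).card = N := ⟨_, rfl⟩
  induction N using Nat.strong_induction_on generalizing G₁ with
  | _ N ih =>
  rcases (reversedEdges G₁ G₂).eq_empty_or_nonempty with hempty | hne
  · rw [eq_of_reversedEdges_eq_empty hskel hempty]
    exact fun _ _ _ _ _ _ => Iff.rfl
  obtain ⟨x, y, hxy₂, hcov⟩ := exists_covered_of_reversedEdges_nonempty hskel hcol hne
  have hf := isFlip_flip hcov
  have hyx₂ : G₂.Edge y x := ((hskel x y).mp hcov.1.adj).resolve_left hxy₂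
  exact (hf.markovEquiv hcov).trans <| ih _ (hN ▸ card_reversedEdges_lt_of_isFlip hcov hf hyx₂ hxy₂)
    (fun i j => (hf.adj_iff hcov).trans (hskel i j))
    (fun i k j => (hf.isCollider_iff hcov).trans (hcol i k j)) rfl

end Finite

end DAG

/-- Two DAGs are Markov equivalent iff they have the same skeleton and the same
collider v-configurations. -/
theorem stmt_10 {V : Type*} [Fintype V] (G₁ G₂ : DAG V) :
    DAG.MarkovEquiv G₁ G₂ ↔
      ((∀ i j : V, G₁.Adj i j ↔ G₂.Adj i j) ∧
        (∀ i k j : V, G₁.IsCollider i k j ↔ G₂.IsCollider i k j)) :=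
  ⟨fun h => ⟨fun _ _ => ⟨h.adj, h.symm.adj⟩, fun _ _ _ => ⟨h.isCollider, h.symm.isCollider⟩⟩,
    fun ⟨hskel, hcol⟩ => DAG.markovEquiv_of_adj_iff_of_isCollider_iff hskel hcol⟩
end

section
/- Let P be Markovian to a DAG G on V. Then sk(P) = sk(G) if and only if P is adjacency faithful with respect to G. -/
open MeasureTheory ProbabilityTheory

variable {V : Type*} [Fintype V] {Ω : Type*} [MeasurableSpace Ω] [StandardBorelSpace Ω]
  [Nonempty Ω] {E : V → Type*} [∀ i, MeasurableSpace (E i)]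
  (μ : MeasureTheory.Measure Ω) [MeasureTheory.IsProbabilityMeasure μ]
  (X : ∀ i, Ω → E i) (hX : ∀ i, Measurable (X i))

lemma nonadj_blocked {V : Type*} (G : DAG V) (a b : V) (hna : ¬ G.Adj a b)
    (π : DAG.Path G a b) : π.Blocked (G.ancestors {a, b}) := by
  by_contra hnb
  set C : Set V := G.ancestors {a, b} with hCdef
  set R : V → Prop := fun v => Relation.TransGen G.Edge v a ∨ Relation.TransGen G.Edge v b
    with hRdef
  set F : ℕ → V := fun t => π.f ⟨min t π.n, by omega⟩ with hF
  have hFeq : ∀ (t : ℕ) (h : t < π.n + 1), F t = π.f ⟨t, h⟩ := by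
    intro t h
    simp only [hF]
    congr 1
    exact Fin.mk_eq_mk.mpr (Nat.min_eq_left (by omega))
  have hF0 : F 0 = a := by rw [hFeq 0 (by omega)]; exact π.first
  have hFn : F π.n = b := by rw [hFeq π.n (by omega)]; exact π.last
  have hFinj : ∀ s t, s ≤ π.n → t ≤ π.n → F s = F t → s = t := by
    intro s t hs ht h
    rw [hFeq s (by omega), hFeq t (by omega)] at h
    simpa using Fin.mk_eq_mk.mp (π.inj h)
  have hadj : ∀ t, t < π.n → G.Adj (F t) (F (t + 1)) := by
    intro t ht
    rw [hFeq t (by omega), hFeq (t + 1) (by omega)]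
    have := π.adj ⟨t, ht⟩
    simpa [Fin.castSucc, Fin.succ, Fin.castAdd, Fin.castLE] using this
  have hcolIff : ∀ t (h1 : 0 < t) (h2 : t < π.n),
      π.ColliderAt t h1 h2 ↔ (G.Edge (F (t - 1)) (F t) ∧ G.Edge (F (t + 1)) (F t)) := by
    intro t h1 h2
    rw [DAG.Path.ColliderAt, hFeq (t - 1) (by omega), hFeq t (by omega),
      hFeq (t + 1) (by omega)]
  simp only [DAG.Path.Blocked, not_exists] at hnb
  push_neg at hnb
  have hint_ne : ∀ t, 0 < t → t < π.n → F t ≠ a ∧ F t ≠ b := by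
    intro t h1 h2
    constructor
    · intro h
      have := hFinj t 0 (by omega) (by omega) (h.trans hF0.symm)
      omega
    · intro h
      have := hFinj t π.n (by omega) (by omega) (h.trans hFn.symm)
      omega
  have memC : ∀ v, v ≠ a → v ≠ b → R v → v ∈ C := by
    intro v hva hvb hr
    refine ⟨by simp [hva, hvb], ?_⟩
    rcases hr with h | h
    · exact ⟨a, by simp, h⟩
    · exact ⟨b, by simp, h⟩
  have C_reach : ∀ v ∈ C, R v := by
    rintro v ⟨-, x, hx, hxr⟩
    simp only [Set.mem_insert_iff, Set.mem_singleton_iff] at hx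
    rcases hx with rfl | rfl
    · exact Or.inl hxr
    · exact Or.inr hxr
  have hcolC : ∀ t (h1 : 0 < t) (h2 : t < π.n), π.ColliderAt t h1 h2 → R (F t) := by
    intro t h1 h2 hc
    have hm := (hnb t h1 h2).2 hc
    rw [← hFeq t (by omega)] at hm
    rcases hm with hm | hm
    · exact C_reach _ hm
    · obtain ⟨hnot, c, hcC, htc⟩ := hm
      rcases C_reach c hcC with h | h
      · exact Or.inl (htc.trans h)
      · exact Or.inr (htc.trans h)
  have colOf : ∀ t (h1 : 0 < t) (h2 : t < π.n), R (F t) → π.ColliderAt t h1 h2 := by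
    intro t h1 h2 hr
    by_contra hc
    have hm := (hnb t h1 h2).1 hc
    rw [← hFeq t (by omega)] at hm
    exact hm (memC _ (hint_ne t h1 h2).1 (hint_ne t h1 h2).2 hr)
  have claimA : ∀ k t, 0 < t → t < π.n → π.n - t ≤ k →
      G.Edge (F t) (F (t + 1)) → R (F t) := by
    intro k
    induction k with
    | zero => intro t h1 h2 hk; omega
    | succ k ih =>
      intro t h1 h2 hk he
      by_cases hend : t + 1 = π.n
      · rw [hend, hFn] at he
        exact Or.inr (Relation.TransGen.single he)
      · have h2' : t + 1 < π.n := by omega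
        by_cases hr : R (F (t + 1))
        · rcases hr with h | h
          · exact Or.inl (Relation.TransGen.head he h)
          · exact Or.inr (Relation.TransGen.head he h)
        · exfalso
          have hncol : ¬ π.ColliderAt (t + 1) (by omega) h2' :=
            fun hc => hr (hcolC _ _ _ hc)
          rw [hcolIff] at hncol
          have hne2 : ¬ G.Edge (F (t + 2)) (F (t + 1)) := by
            intro hxx
            exact hncol ⟨by simpa using he, hxx⟩
          have he2 : G.Edge (F (t + 1)) (F (t + 2)) :=
            (hadj (t + 1) h2').resolve_right hne2
          exact hr (ih (t + 1) (by omega) h2' (by omega) he2)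
  have claimB : ∀ k t, 0 < t → t < π.n → t ≤ k →
      G.Edge (F t) (F (t - 1)) → R (F t) := by
    intro k
    induction k with
    | zero => intro t h1 h2 hk; omega
    | succ k ih =>
      intro t h1 h2 hk he
      by_cases hstart : t - 1 = 0
      · rw [hstart, hF0] at he
        exact Or.inl (Relation.TransGen.single he)
      · have h1' : 0 < t - 1 := by omega
        have h2' : t - 1 < π.n := by omega
        by_cases hr : R (F (t - 1))
        · rcases hr with h | h
          · exact Or.inl (Relation.TransGen.head he h)
          · exact Or.inr (Relation.TransGen.head he h)
        · exfalso
          have hncol : ¬ π.ColliderAt (t - 1) h1' h2' :=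
            fun hc => hr (hcolC _ _ _ hc)
          rw [hcolIff] at hncol
          have e1 : t - 1 + 1 = t := by omega
          rw [e1] at hncol
          have hne2 : ¬ G.Edge (F (t - 1 - 1)) (F (t - 1)) := by
            intro hxx
            exact hncol ⟨hxx, he⟩
          have hadj' := hadj (t - 1 - 1) (by omega)
          have e2 : t - 1 - 1 + 1 = t - 1 := by omega
          rw [e2] at hadj'
          have he2 : G.Edge (F (t - 1)) (F (t - 1 - 1)) :=
            hadj'.resolve_left hne2
          exact hr (ih (t - 1) h1' h2' (by omega) he2)
  -- main argument
  have hn1 : π.n ≠ 1 := by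
    intro h
    apply hna
    have h0 := hadj 0 π.npos
    rw [hF0] at h0
    rw [show (0 + 1 : ℕ) = π.n from by omega, hFn] at h0
    exact h0
  have h2n : 2 ≤ π.n := by have := π.npos; omega
  have e01 : G.Edge (F 0) (F 1) := by
    rcases hadj 0 π.npos with h | h
    · exact h
    · exfalso
      have hr : R (F 1) := Or.inl (Relation.TransGen.single (by rwa [hF0] at h))
      have hc := colOf 1 one_pos (by omega) hr
      rw [hcolIff] at hc
      have hedge : G.Edge (F 0) (F 1) := by simpa using hc.1
      exact G.acyclic (F 0) (Relation.TransGen.head hedge (Relation.TransGen.single h))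
  have hcol1 : π.ColliderAt 1 one_pos (by omega) := by
    by_contra hc
    have hc' := hc
    rw [hcolIff] at hc'
    have hne2 : ¬ G.Edge (F 2) (F 1) := by
      intro hxx
      exact hc' ⟨by simpa using e01, hxx⟩
    have he12 : G.Edge (F 1) (F 2) := (hadj 1 (by omega)).resolve_right hne2
    exact hc (colOf 1 one_pos (by omega) (claimA π.n 1 one_pos (by omega) (by omega) he12))
  have hcol1' := (hcolIff 1 one_pos (by omega)).mp hcol1
  have e21 : G.Edge (F 2) (F 1) := hcol1'.2
  have hr1 : R (F 1) := hcolC 1 one_pos (by omega) hcol1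
  by_cases hn2 : π.n = 2
  · have hb2 : F 2 = b := by rw [show (2 : ℕ) = π.n from hn2.symm, hFn]
    rcases hr1 with h | h
    · exact G.acyclic a (Relation.TransGen.head (by rwa [hF0] at e01) h)
    · exact G.acyclic b (Relation.TransGen.head (by rwa [hb2] at e21) h)
  · have h3 : 3 ≤ π.n := by omega
    have hr2 : R (F 2) :=
      claimB π.n 2 (by omega) (by omega) (by omega) (by norm_num; exact e21)
    have hcol2 := (hcolIff 2 (by omega) (by omega)).mp (colOf 2 (by omega) (by omega) hr2)
    have e12 : G.Edge (F 1) (F 2) := by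
      have := hcol2.1
      norm_num at this
      exact this
    exact G.acyclic (F 1) (Relation.TransGen.head e12 (Relation.TransGen.single e21))

lemma nonadj_dsep {V : Type*} (G : DAG V) (a b : V) (hna : ¬ G.Adj a b) :
    G.dSep {a} {b} (G.ancestors {a, b}) := by
  intro x hx y hy π
  simp only [Set.mem_singleton_iff] at hx hy
  subst hx hy
  exact nonadj_blocked _ _ _ hna π

/-- If `P` is Markovian to `G`, then `sk(P) = sk(G)` iff `P` is adjacency faithful wrt `G`. -/
theorem stmt_11 (G : DAG V) (hM : MarkovTo μ X hX G) :
    SkelEq μ X hX G ↔ AdjFaithful μ X hX G := by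
  constructor
  · intro hsk i j hadj
    exact ((hsk i j).mp hadj).2
  · intro hAF i j
    constructor
    · intro hadj
      refine ⟨?_, hAF i j hadj⟩
      rintro rfl
      rcases hadj with h | h <;> exact G.acyclic i (Relation.TransGen.single h)
    · rintro ⟨hne, hno⟩
      by_contra hna
      refine hno ⟨G.ancestors {i, j}, ?_, ?_⟩
      · intro v hv
        exact hv.1
      · refine hM {i} {j} (G.ancestors {i, j}) (by simpa using hne) ?_ ?_
          (nonadj_dsep G i j hna)
        · simp only [Set.disjoint_singleton_left]
          intro h
          exact h.1 (by simp)
        · simp only [Set.disjoint_singleton_left]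
          intro h
          exact h.1 (by simp)
end

section
/- If P satisfies singleton transitivity, i.e., for all distinct i, j, k ∈ V and C ⊆ V∖{i,j,k}, {i} ⫫ {j} | C and {i} ⫫ {j} | C∪{k} together imply {i} ⫫ {k} | C or {j} ⫫ {k} | C, then P is V-stable. -/
open MeasureTheory ProbabilityTheory

variable {V : Type*} [Fintype V] {Ω : Type*} [MeasurableSpace Ω] [StandardBorelSpace Ω]
  [Nonempty Ω] {E : V → Type*} [∀ i, MeasurableSpace (E i)]
  (μ : MeasureTheory.Measure Ω) [MeasureTheory.IsProbabilityMeasure μ]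
  (X : ∀ i, Ω → E i) (hX : ∀ i, Measurable (X i))

/-- Singleton transitivity implies V-stability. -/
theorem stmt_13
    (hst : ∀ i j k : V, i ≠ j → i ≠ k → j ≠ k → ∀ C : Set V,
      C ⊆ ({i, j, k} : Set V)ᶜ →
      CI μ X hX {i} {j} C → CI μ X hX {i} {j} (C ∪ {k}) →
      (CI μ X hX {i} {k} C ∨ CI μ X hX {j} {k} C)) :
    VStable μ X hX := by
  rintro i k j ⟨hij, hik, hjk, ⟨_, hikns⟩, ⟨_, hjkns⟩, _⟩ C hC ⟨h1, h2⟩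
  rcases hst i j k hij hik hjk C hC h1 h2 with h | h
  · refine hikns ⟨C, fun x hx => ?_, h⟩
    have := hC hx; simp only [Set.mem_compl_iff, Set.mem_insert_iff,
      Set.mem_singleton_iff] at this ⊢; tauto
  · refine hjkns ⟨C, fun x hx => ?_, h⟩
    have := hC hx; simp only [Set.mem_compl_iff, Set.mem_insert_iff,
      Set.mem_singleton_iff] at this ⊢; tauto
end

section
/- There exists a DAG satisfying the V-OUS and collider-stable orientation rule with respect to P if and only if there exists a DAG G with sk(P) = sk(G) such that P is V-OUS and collider-stable with respect to G. -/
open MeasureTheory ProbabilityTheory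

variable {V : Type*} [Fintype V] {Ω : Type*} [MeasurableSpace Ω] [StandardBorelSpace Ω]
  [Nonempty Ω] {E : V → Type*} [∀ i, MeasurableSpace (E i)]
  (μ : MeasureTheory.Measure Ω) [MeasureTheory.IsProbabilityMeasure μ]
  (X : ∀ i, Ω → E i) (hX : ∀ i, Measurable (X i))

/-- There exists a DAG satisfying the V-OUS and collider-stable orientation rule wrt `P`
iff there exists a DAG `G` with `sk(P) = sk(G)` such that `P` is V-OUS and
collider-stable wrt `G`. -/
theorem stmt_14 :
    (∃ G : DAG V, SatisfiesRule μ X hX G) ↔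
      (∃ G : DAG V, SkelEq μ X hX G ∧ VOUS μ X hX G ∧ ColliderStable μ X hX G) := by
  have hsub : ∀ i j k : V, ({i, j} : Set V)ᶜ ⊇ ({i, j, k} : Set V)ᶜ → True := fun _ _ _ _ => trivial
  constructor
  · rintro ⟨G, hsk, hcol, hnon⟩
    refine ⟨G, hsk, ?_, ?_⟩
    · -- VOUS
      intro i k j hnc C hC hCI
      by_contra hno
      have hvr : VConfigRel (SkP μ X hX) i k j := by
        obtain ⟨hij, hik, hjk, haik, hajk, hnij⟩ := hnc.1
        exact ⟨hij, hik, hjk, (hsk i k).mp haik, (hsk j k).mp hajk,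
          fun h => hnij ((hsk i j).mpr h)⟩
      exact hnc.2 (hcol i k j ⟨hvr, C, hC, hCI, hno⟩).2
    · -- ColliderStable
      intro i k j hc
      by_cases hall : ∀ C : Set V, C ⊆ ({i, j} : Set V)ᶜ → CI μ X hX {i} {j} C → k ∈ C
      · have hvr : VConfigRel (SkP μ X hX) i k j := by
          obtain ⟨hij, hik, hjk, haik, hajk, hnij⟩ := hc.1
          exact ⟨hij, hik, hjk, (hsk i k).mp haik, (hsk j k).mp hajk,
            fun h => hnij ((hsk i j).mpr h)⟩
        exact absurd hc.2 (hnon i k j ⟨hvr, hall⟩).2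
      · push_neg at hall
        obtain ⟨C, hC, hCI, hk⟩ := hall
        refine ⟨C, ?_, hCI⟩
        intro x hx hmem
        rcases hmem with rfl | rfl | rfl
        · exact hC hx (Or.inl rfl)
        · exact hC hx (Or.inr rfl)
        · exact hk hx
  · rintro ⟨G, hsk, hvous, hcs⟩
    refine ⟨G, hsk, ?_, ?_⟩
    · -- assigned colliders are colliders
      rintro i k j ⟨hvr, C, hC, hCI, hno⟩
      obtain ⟨hij, hik, hjk, haik, hajk, hnij⟩ := hvr
      have hvc : G.VConfig i k j :=
        ⟨hij, hik, hjk, (hsk i k).mpr haik, (hsk j k).mpr hajk,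
          fun h => hnij ((hsk i j).mp h)⟩
      by_contra hnc
      have hncol : G.IsNonCollider i k j := ⟨hvc, fun h => hnc ⟨hvc, h⟩⟩
      exact hno (hvous i k j hncol C hC hCI)
    · -- assigned non-colliders are non-colliders
      rintro i k j ⟨hvr, hall⟩
      obtain ⟨hij, hik, hjk, haik, hajk, hnij⟩ := hvr
      have hvc : G.VConfig i k j :=
        ⟨hij, hik, hjk, (hsk i k).mpr haik, (hsk j k).mpr hajk,
          fun h => hnij ((hsk i j).mp h)⟩
      refine ⟨hvc, fun h => ?_⟩
      obtain ⟨C, hC, hCI⟩ := hcs i k j ⟨hvc, h⟩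
      have hkC : k ∈ C := hall C (fun x hx hmem => by
        rcases hmem with rfl | rfl
        · exact hC hx (Or.inl rfl)
        · exact hC hx (Or.inr (Or.inl rfl))) hCI
      exact hC hkC (Or.inr (Or.inr rfl))
end
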